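/- arXiv:2305.01691 — 6 statements merged into one kernel-verified Lean document; each statement's English description precedes it below -/
import Mathlib

section
/- Let H be a nontrivial complex Hilbert space, Ω ⊆ ℂ an open set, T : Ω → B(H) continuous in the operator norm, and let (U_n)_{n∈ℕ} be a nondecreasing sequence of nontrivial linear subspaces of H whose union is dense in H. For z ∈ Ω define γ_n(z) = min( inf{‖T(z)u‖ : u ∈ U_n, ‖u‖ = 1}, inf{‖T(z)* u‖ : u ∈ U_n, ‖u‖ = 1} ), and define g(z) = ‖T(z)⁻¹‖⁻¹ if T(z) is invertible and g(z) = 0 otherwise. Then: (a) γ_n(z) ≥ g(z) for all n and all z ∈ Ω; (b) for each fixed z, the sequence (γ_n(z)) is nonincreasing and converges to g(z); (c) the convergence γ_n → g is uniform on every compact subset of Ω. (Bounded-operator version of the injection-moduli theorem.) -/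
set_option linter.unusedSectionVars false
set_option linter.unusedVariables false
set_option maxHeartbeats 800000
open scoped Classical
namespace InjModAux
open ContinuousLinearMap
variable {H : Type*} [NormedAddCommGroup H] [InnerProductSpace ℂ H] [CompleteSpace H]
  [Nontrivial H]





noncomputable def sphSet (A : H →L[ℂ] H) (V : Set H) : Set ℝ :=
  {r : ℝ | ∃ u ∈ V, ‖u‖ = 1 ∧ r = ‖A u‖}

lemma sphSet_nonempty {A : H →L[ℂ] H} {V : Set H} (h : ∃ u ∈ V, ‖u‖ = 1) :
    (sphSet A V).Nonempty := by
  obtain ⟨u, hu, hn⟩ := h; exact ⟨‖A u‖, u, hu, hn, rfl⟩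

lemma sphSet_bdd (A : H →L[ℂ] H) (V : Set H) : BddBelow (sphSet A V) :=
  ⟨0, by rintro r ⟨u, hu, hn, rfl⟩; positivity⟩

lemma le_phi {A : H →L[ℂ] H} {V : Set H} {c : ℝ} (hne : ∃ u ∈ V, ‖u‖ = 1)
    (h : ∀ u ∈ V, ‖u‖ = 1 → c ≤ ‖A u‖) : c ≤ sInf (sphSet A V) :=
  le_csInf (sphSet_nonempty hne) (by rintro r ⟨u, hu, hn, rfl⟩; exact h u hu hn)

lemma phi_le {A : H →L[ℂ] H} {V : Set H} {u : H} (hu : u ∈ V) (hn : ‖u‖ = 1) :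
    sInf (sphSet A V) ≤ ‖A u‖ :=
  csInf_le (sphSet_bdd A V) ⟨u, hu, hn, rfl⟩

lemma phi_nonneg {A : H →L[ℂ] H} {V : Set H} (hne : ∃ u ∈ V, ‖u‖ = 1) :
    0 ≤ sInf (sphSet A V) :=
  le_phi hne fun u _ _ => norm_nonneg _

lemma phi_anti {A : H →L[ℂ] H} {V W : Set H} (hVW : V ⊆ W) (hne : ∃ u ∈ V, ‖u‖ = 1) :
    sInf (sphSet A W) ≤ sInf (sphSet A V) :=
  csInf_le_csInf (sphSet_bdd A W) (sphSet_nonempty hne)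
    (by rintro r ⟨u, hu, hn, rfl⟩; exact ⟨u, hVW hu, hn, rfl⟩)

lemma phi_lip {A B : H →L[ℂ] H} {V : Set H} (hne : ∃ u ∈ V, ‖u‖ = 1) :
    sInf (sphSet A V) ≤ sInf (sphSet B V) + ‖A - B‖ := by
  rw [← sub_le_iff_le_add]
  apply le_csInf (sphSet_nonempty hne)
  rintro r ⟨u, hu, hn, rfl⟩
  have h1 : sInf (sphSet A V) ≤ ‖A u‖ := phi_le hu hn
  have key : A u = B u + (A - B) u := by simp
  have h2 : ‖A u‖ ≤ ‖B u‖ + ‖A - B‖ := by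
    calc ‖A u‖ ≤ ‖B u‖ + ‖(A - B) u‖ := by rw [key]; exact norm_add_le _ _
      _ ≤ ‖B u‖ + ‖A - B‖ * ‖u‖ := by gcongr; exact (A - B).le_opNorm u
      _ = ‖B u‖ + ‖A - B‖ := by rw [hn, mul_one]
  linarith

/-- min of the two injection-moduli infima over the unit sphere of `V`. -/
noncomputable def Gam (A : H →L[ℂ] H) (V : Set H) : ℝ :=
  min (sInf (sphSet A V)) (sInf (sphSet (adjoint A) V))

lemma abs_phi_sub_phi {A B : H →L[ℂ] H} {V : Set H} (hne : ∃ u ∈ V, ‖u‖ = 1) :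
    |sInf (sphSet A V) - sInf (sphSet B V)| ≤ ‖A - B‖ := by
  rw [abs_sub_le_iff]
  constructor
  · linarith [phi_lip (A := A) (B := B) (V := V) hne]
  · have := phi_lip (A := B) (B := A) (V := V) hne
    rw [← neg_sub, norm_neg] at this
    linarith

lemma Gam_lip {A B : H →L[ℂ] H} {V : Set H} (hne : ∃ u ∈ V, ‖u‖ = 1) :
    |Gam A V - Gam B V| ≤ ‖A - B‖ := by
  have hadj : adjoint A - adjoint B = adjoint (A - B) := (map_sub (adjoint (𝕜 := ℂ)) A B).symm
  have h2 : |sInf (sphSet (adjoint A) V) - sInf (sphSet (adjoint B) V)| ≤ ‖A - B‖ := by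
    have := abs_phi_sub_phi (A := adjoint A) (B := adjoint B) (V := V) hne
    rwa [hadj, LinearIsometryEquiv.norm_map] at this
  refine le_trans (abs_min_sub_min_le_max _ _ _ _) ?_
  exact max_le (abs_phi_sub_phi hne) h2

lemma norm_normalize {u : H} (hu : u ≠ 0) : ‖((‖u‖ : ℂ)⁻¹ • u)‖ = 1 := by
  rw [norm_smul, norm_inv, Complex.norm_real, Real.norm_eq_abs, abs_of_nonneg (norm_nonneg u),
    inv_mul_cancel₀ (norm_ne_zero_iff.2 hu)]

lemma inv_comp {A : H →L[ℂ] H} (h : IsUnit A) :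
    (((h.unit⁻¹ : (H →L[ℂ] H)ˣ) : H →L[ℂ] H)) ∘L A = 1 := by
  rw [← ContinuousLinearMap.mul_def]
  have h2 : (↑h.unit⁻¹ : H →L[ℂ] H) * ↑h.unit = 1 := h.unit.inv_mul
  rwa [h.unit_spec] at h2

lemma comp_inv {A : H →L[ℂ] H} (h : IsUnit A) :
    A ∘L (((h.unit⁻¹ : (H →L[ℂ] H)ˣ) : H →L[ℂ] H)) = 1 := by
  rw [← ContinuousLinearMap.mul_def]
  have h2 : (↑h.unit : H →L[ℂ] H) * ↑h.unit⁻¹ = 1 := h.unit.mul_inv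
  rwa [h.unit_spec] at h2

lemma norm_inv_pos {A : H →L[ℂ] H} (h : IsUnit A) :
    0 < ‖((h.unit⁻¹ : (H →L[ℂ] H)ˣ) : H →L[ℂ] H)‖ := by
  rw [norm_pos_iff]
  intro hB
  obtain ⟨u, hu⟩ := exists_ne (0 : H)
  have := congrArg (fun f : H →L[ℂ] H => f u) (inv_comp h)
  simp [hB] at this
  exact hu this.symm

lemma norm_le_inv_mul {A : H →L[ℂ] H} (h : IsUnit A) (u : H) :
    ‖u‖ ≤ ‖((h.unit⁻¹ : (H →L[ℂ] H)ˣ) : H →L[ℂ] H)‖ * ‖A u‖ := by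
  set B := ((h.unit⁻¹ : (H →L[ℂ] H)ˣ) : H →L[ℂ] H)
  have : B (A u) = u := by
    have := congrArg (fun f : H →L[ℂ] H => f u) (inv_comp h)
    simpa using this
  calc ‖u‖ = ‖B (A u)‖ := by rw [this]
    _ ≤ ‖B‖ * ‖A u‖ := B.le_opNorm _

lemma norm_le_inv_mul_adjoint {A : H →L[ℂ] H} (h : IsUnit A) (u : H) :
    ‖u‖ ≤ ‖((h.unit⁻¹ : (H →L[ℂ] H)ˣ) : H →L[ℂ] H)‖ * ‖adjoint A u‖ := by
  set B := ((h.unit⁻¹ : (H →L[ℂ] H)ˣ) : H →L[ℂ] H)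
  have hcomp : adjoint B ∘L adjoint A = 1 := by
    rw [← adjoint_comp, comp_inv h]
    simp [ContinuousLinearMap.one_def, adjoint_id]
  have happ : (adjoint B) (adjoint A u) = u := by
    have := congrArg (fun f : H →L[ℂ] H => f u) hcomp
    simpa using this
  calc ‖u‖ = ‖(adjoint B) (adjoint A u)‖ := by rw [happ]
    _ ≤ ‖adjoint B‖ * ‖adjoint A u‖ := (adjoint B).le_opNorm _
    _ = ‖B‖ * ‖adjoint A u‖ := by rw [LinearIsometryEquiv.norm_map]

/-- If both `A` and its adjoint are bounded below on the unit sphere, `A` is invertible. -/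

lemma isUnit_of_bddBelow {A : H →L[ℂ] H} {c : ℝ} (hc : 0 < c)
    (h1 : ∀ u : H, ‖u‖ = 1 → c ≤ ‖A u‖)
    (h2 : ∀ u : H, ‖u‖ = 1 → c ≤ ‖adjoint A u‖) : IsUnit A := by
  have key : ∀ (B : H →L[ℂ] H), (∀ u : H, ‖u‖ = 1 → c ≤ ‖B u‖) →
      ∀ u : H, c * ‖u‖ ≤ ‖B u‖ := by
    intro B hB u
    rcases eq_or_ne u 0 with rfl | hu
    · simp
    · have h1 := hB _ (norm_normalize hu)
      rw [map_smul, norm_smul, norm_inv, Complex.norm_real, Real.norm_eq_abs,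
        abs_of_nonneg (norm_nonneg u)] at h1
      have hn : 0 < ‖u‖ := norm_pos_iff.2 hu
      calc c * ‖u‖ ≤ (‖u‖⁻¹ * ‖B u‖) * ‖u‖ := by gcongr
        _ = ‖B u‖ := by field_simp
  have hA := key A h1
  have hAadj := key (adjoint A) h2
  have hanti : AntilipschitzWith ⟨c⁻¹, by positivity⟩ A := by
    apply A.antilipschitz_of_bound
    intro x
    have := hA x
    change ‖x‖ ≤ c⁻¹ * ‖A x‖
    rw [← le_div_iff₀' hc] at this
    calc ‖x‖ ≤ ‖A x‖ / c := this
      _ = c⁻¹ * ‖A x‖ := by ring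
  have hinj : Function.Injective A := hanti.injective
  have hclosed : IsClosed (Set.range A) := hanti.isClosed_range A.uniformContinuous
  -- range as submodule
  have hclosedR : IsClosed ((LinearMap.range (A : H →ₗ[ℂ] H) : Submodule ℂ H) : Set H) := by
    rwa [LinearMap.coe_range]
  haveI : CompleteSpace (LinearMap.range (A : H →ₗ[ℂ] H) : Submodule ℂ H) := hclosedR.completeSpace_coe
  have horth : (LinearMap.range (A : H →ₗ[ℂ] H) : Submodule ℂ H)ᗮ = ⊥ := by
    rw [Submodule.eq_bot_iff]
    intro y hy
    have hAy : adjoint A y = 0 := by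
      have hz : (inner ℂ (adjoint A y) (adjoint A y) : ℂ) = 0 := by
        rw [adjoint_inner_left]
        have : A (adjoint A y) ∈ LinearMap.range (A : H →ₗ[ℂ] H) := LinearMap.mem_range_self _ _
        have := (Submodule.mem_orthogonal _ y).1 hy _ this
        rw [← inner_conj_symm, this, map_zero]
      exact inner_self_eq_zero.1 hz
    have := hAadj y
    rw [hAy, norm_zero] at this
    have hcy : c * ‖y‖ ≤ 0 := this
    have : ‖y‖ ≤ 0 := nonpos_of_mul_nonpos_right (by linarith [mul_comm c ‖y‖]) hc
    exact norm_le_zero_iff.1 this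
  have hsurj : LinearMap.range (A : H →ₗ[ℂ] H) = ⊤ := by
    rwa [Submodule.orthogonal_eq_bot_iff] at horth
  rw [ContinuousLinearMap.isUnit_iff_bijective]
  exact ⟨hinj, LinearMap.range_eq_top.1 hsurj⟩


lemma univ_unit : ∃ u ∈ (Set.univ : Set H), ‖u‖ = 1 := by
  obtain ⟨u, hu⟩ := exists_ne (0 : H)
  exact ⟨(‖u‖ : ℂ)⁻¹ • u, Set.mem_univ _, norm_normalize hu⟩

/-- The whole-space min-infimum equals the `g` of the statement. -/
lemma Gam_univ_eq (A : H →L[ℂ] H) :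
    Gam A (Set.univ : Set H) = if h : IsUnit A
      then ‖((h.unit⁻¹ : (H →L[ℂ] H)ˣ) : H →L[ℂ] H)‖⁻¹ else 0 := by
  split_ifs with h
  · set B := ((h.unit⁻¹ : (H →L[ℂ] H)ˣ) : H →L[ℂ] H) with hB
    have hb : 0 < ‖B‖ := norm_inv_pos h
    have hlow1 : ‖B‖⁻¹ ≤ sInf (sphSet A (Set.univ : Set H)) := by
      apply le_phi univ_unit
      intro u _ hn
      have := norm_le_inv_mul h u
      rw [hn] at this
      rw [inv_le_iff_one_le_mul₀ hb]
      linarith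
    have hlow2 : ‖B‖⁻¹ ≤ sInf (sphSet (adjoint A) (Set.univ : Set H)) := by
      apply le_phi univ_unit
      intro u _ hn
      have := norm_le_inv_mul_adjoint h u
      rw [hn] at this
      rw [inv_le_iff_one_le_mul₀ hb]
      linarith
    have hup : sInf (sphSet A (Set.univ : Set H)) ≤ ‖B‖⁻¹ := by
      apply le_of_forall_pos_le_add
      intro ε hε
      set c := ‖B‖⁻¹ + ε with hc
      have hcpos : 0 < c := by positivity
      have hcinv : c⁻¹ < ‖B‖ := by
        rw [inv_lt_iff_one_lt_mul₀ hcpos]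
        have hBc : ‖B‖ * c = 1 + ‖B‖ * ε := by
          rw [hc, mul_add, mul_inv_cancel₀ (ne_of_gt hb)]
        nlinarith [mul_pos hb hε]
      obtain ⟨w, hw⟩ : ∃ w : H, c⁻¹ * ‖w‖ < ‖B w‖ := by
        by_contra hcon
        push_neg at hcon
        have hle : ‖B‖ ≤ c⁻¹ := B.opNorm_le_bound (by positivity) fun x => hcon x
        exact absurd hle (not_le.2 hcinv)
      have hBw : 0 < ‖B w‖ := lt_of_le_of_lt (by positivity) hw
      have hBw0 : B w ≠ 0 := norm_pos_iff.1 hBw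
      set u := (‖B w‖ : ℂ)⁻¹ • B w with hu
      have hun : ‖u‖ = 1 := norm_normalize hBw0
      have hABw : A (B w) = w := by
        have := congrArg (fun f : H →L[ℂ] H => f w) (comp_inv h)
        simpa using this
      have hAu : ‖A u‖ = ‖w‖ / ‖B w‖ := by
        rw [hu, map_smul, hABw, norm_smul, norm_inv, Complex.norm_real, Real.norm_eq_abs,
          abs_of_nonneg (norm_nonneg _)]
        ring
      have hAuc : ‖A u‖ ≤ c := by
        rw [hAu, div_le_iff₀ hBw]
        have := (inv_mul_lt_iff₀ hcpos).1 hw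
        linarith
      calc sInf (sphSet A (Set.univ : Set H)) ≤ ‖A u‖ := phi_le (Set.mem_univ u) hun
        _ ≤ ‖B‖⁻¹ + ε := hAuc
    exact le_antisymm (le_trans (min_le_left _ _) hup) (le_min hlow1 hlow2)
  · apply le_antisymm
    · by_contra h0
      push_neg at h0
      apply h
      apply isUnit_of_bddBelow h0 (A := A)
      · intro u hn
        exact le_trans (min_le_left _ _) (phi_le (Set.mem_univ u) hn)
      · intro u hn
        exact le_trans (min_le_right _ _) (phi_le (Set.mem_univ u) hn)
    · exact le_min (phi_nonneg univ_unit) (phi_nonneg univ_unit)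

/-- Density approximation: some unit vector in some `U n` nearly achieves the
whole-space infimum. -/
lemma approx (U : ℕ → Submodule ℂ H) (hdense : Dense (⋃ n : ℕ, (U n : Set H)))
    (A : H →L[ℂ] H) {ε : ℝ} (hε : 0 < ε) :
    ∃ n : ℕ, ∃ u : H, u ∈ U n ∧ ‖u‖ = 1 ∧
      ‖A u‖ ≤ sInf (sphSet A (Set.univ : Set H)) + ε := by
  set s := sInf (sphSet A (Set.univ : Set H)) with hs
  obtain ⟨r, hrmem, hr⟩ : ∃ r ∈ sphSet A (Set.univ : Set H), r < s + ε / 2 :=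
    exists_lt_of_csInf_lt (sphSet_nonempty univ_unit) (by linarith)
  obtain ⟨v, -, hv1, rfl⟩ := hrmem
  set δ := min (1/2 : ℝ) (ε / (4 * (‖A‖ + 1))) with hδdef
  have hδpos : 0 < δ := lt_min (by norm_num) (by positivity)
  have hδhalf : δ ≤ 1/2 := min_le_left _ _
  have hδA : 2 * δ * ‖A‖ ≤ ε / 2 := by
    have h1 : δ ≤ ε / (4 * (‖A‖ + 1)) := min_le_right _ _
    have h2 : (0:ℝ) < 4 * (‖A‖ + 1) := by positivity
    have h3 : δ * (4 * (‖A‖ + 1)) ≤ ε := by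
      rw [← le_div_iff₀ h2]; exact h1
    nlinarith [norm_nonneg A, hδpos.le]
  obtain ⟨u, humem, hudist⟩ : ∃ u ∈ ⋃ n : ℕ, (U n : Set H), dist v u < δ :=
    Metric.mem_closure_iff.1 (hdense v) δ hδpos
  obtain ⟨sU, ⟨n, rfl⟩, hun⟩ := humem
  refine ⟨n, ?_⟩
  have hvu : ‖v - u‖ < δ := by rwa [dist_eq_norm] at hudist
  have hun' : (u : H) ∈ U n := hun
  have hul : (1:ℝ)/2 ≤ ‖u‖ := by
    have h1 : ‖v‖ - ‖u‖ ≤ ‖v - u‖ := norm_sub_norm_le v u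
    rw [hv1] at h1
    linarith
  have hu0 : u ≠ 0 := by
    intro h0
    rw [h0, norm_zero] at hul
    linarith
  have hnu : (0:ℝ) < ‖u‖ := by linarith
  set u' := (‖u‖ : ℂ)⁻¹ • u with hu'
  have hu'mem : u' ∈ U n := (U n).smul_mem _ hun'
  have hu'n : ‖u'‖ = 1 := norm_normalize hu0
  have hu'u : ‖u' - u‖ ≤ δ := by
    have hcalc : u' - u = ((‖u‖ : ℂ)⁻¹ - 1) • u := by
      rw [sub_smul, one_smul]
    have hsc : ((‖u‖ : ℂ)⁻¹ - 1) = (((‖u‖⁻¹ - 1 : ℝ)) : ℂ) := by push_cast; ring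
    have : ‖u' - u‖ = |1 - ‖u‖| := by
      rw [hcalc, hsc, norm_smul, Complex.norm_real, Real.norm_eq_abs, ← abs_of_pos hnu,
        ← abs_mul]
      congr 1
      simp only [abs_of_pos hnu]
      rw [sub_mul, inv_mul_cancel₀ hnu.ne', one_mul]
    rw [this]
    have h1 : |1 - ‖u‖| = |‖v‖ - ‖u‖| := by rw [hv1]
    have h2 : |‖v‖ - ‖u‖| ≤ ‖v - u‖ := abs_norm_sub_norm_le v u
    linarith
  have hu'v : ‖u' - v‖ ≤ 2 * δ := by
    have h1 : ‖u' - v‖ ≤ ‖u' - u‖ + ‖u - v‖ := norm_sub_le_norm_sub_add_norm_sub u' u v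
    have h2 : ‖u - v‖ = ‖v - u‖ := norm_sub_rev u v
    linarith
  refine ⟨u', hu'mem, hu'n, ?_⟩
  have hAd : ‖A u' - A v‖ ≤ ‖A‖ * (2 * δ) := by
    calc ‖A u' - A v‖ = ‖A (u' - v)‖ := by rw [map_sub]
      _ ≤ ‖A‖ * ‖u' - v‖ := A.le_opNorm _
      _ ≤ ‖A‖ * (2 * δ) := by gcongr
  have h1 : ‖A u'‖ ≤ ‖A v‖ + ‖A u' - A v‖ := by
    have := norm_add_le (A v) (A u' - A v)
    simpa using this
  have h2 : ‖A‖ * (2 * δ) ≤ ε / 2 := by nlinarith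
  linarith

/-- Dini's theorem on a compact subset of an open set in `ℂ`. -/
lemma dini {Ω : Set ℂ} (hopen : IsOpen Ω) {K : Set ℂ} (hK : K ⊆ Ω) (hcomp : IsCompact K)
    {γ : ℕ → ℂ → ℝ} {g : ℂ → ℝ}
    (hcont : ∀ n : ℕ, ContinuousOn (γ n) Ω) (hgcont : ContinuousOn g Ω)
    (hanti : ∀ z ∈ Ω, Antitone fun n : ℕ => γ n z)
    (hlim : ∀ z ∈ Ω, Filter.Tendsto (fun n : ℕ => γ n z) Filter.atTop (nhds (g z)))
    (hge : ∀ n : ℕ, ∀ z ∈ Ω, g z ≤ γ n z) :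
    TendstoUniformlyOn (fun n z => γ n z) g Filter.atTop K := by
  rw [Metric.tendstoUniformlyOn_iff]
  intro ε hε
  set V : ℕ → Set ℂ := fun n => Ω ∩ (fun z => γ n z - g z) ⁻¹' Set.Iio ε with hV
  have hVopen : ∀ n, IsOpen (V n) := by
    intro n
    exact ContinuousOn.isOpen_inter_preimage ((hcont n).sub hgcont) hopen isOpen_Iio
  have hcover : K ⊆ ⋃ n, V n := by
    intro z hz
    have hzΩ : z ∈ Ω := hK hz
    have := (hlim z hzΩ).eventually_lt_const (lt_add_of_pos_right (g z) hε)
    obtain ⟨n, hn⟩ := this.exists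
    exact Set.mem_iUnion.2 ⟨n, hzΩ, by simpa [Set.mem_preimage] using by linarith⟩
  obtain ⟨t, ht⟩ := hcomp.elim_finite_subcover V hVopen hcover
  set N := t.sup id with hN
  rw [Filter.eventually_atTop]
  refine ⟨N, fun n hn z hz => ?_⟩
  obtain ⟨i, hit, hzi⟩ := Set.mem_iUnion₂.1 (ht hz)
  have hiN : i ≤ n := le_trans (Finset.le_sup (f := id) hit) hn
  have hzΩ : z ∈ Ω := hzi.1
  have h1 : γ i z - g z < ε := hzi.2
  have h2 : γ n z ≤ γ i z := hanti z hzΩ hiN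
  have h3 : g z ≤ γ n z := hge n z hzΩ
  rw [Real.dist_eq, abs_sub_comm, abs_of_nonneg (by linarith)]
  linarith

end InjModAux

open InjModAux in
/-- Bounded-operator version of the injection-moduli theorem: the functions
`γ_n(z) = min( inf{‖T(z)u‖ : u ∈ U_n, ‖u‖=1}, inf{‖T(z)*u‖ : u ∈ U_n, ‖u‖=1} )`
dominate `g(z) = ‖T(z)⁻¹‖⁻¹` (with convention `0` when `T(z)` is not invertible),
decrease monotonically to it pointwise, and converge uniformly on compact subsets. -/
theorem stmt_5 {H : Type*} [NormedAddCommGroup H] [InnerProductSpace ℂ H]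
    [CompleteSpace H] [Nontrivial H]
    (Ω : Set ℂ) (hopen : IsOpen Ω)
    (T : ℂ → H →L[ℂ] H) (hT : ContinuousOn T Ω)
    (U : ℕ → Submodule ℂ H) (hmono : Monotone U)
    (hnontriv : ∀ n : ℕ, ∃ u ∈ U n, u ≠ 0)
    (hdense : Dense (⋃ n : ℕ, (U n : Set H)))
    (γ : ℕ → ℂ → ℝ)
    (hγ : ∀ (n : ℕ) (z : ℂ), γ n z =
      min (sInf {r : ℝ | ∃ u ∈ U n, ‖u‖ = 1 ∧ r = ‖T z u‖})
          (sInf {r : ℝ | ∃ u ∈ U n, ‖u‖ = 1 ∧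
            r = ‖ContinuousLinearMap.adjoint (T z) u‖}))
    (g : ℂ → ℝ)
    (hg : ∀ z : ℂ, g z = if h : IsUnit (T z)
        then ‖((h.unit⁻¹ : (H →L[ℂ] H)ˣ) : H →L[ℂ] H)‖⁻¹ else 0) :
    (∀ n : ℕ, ∀ z ∈ Ω, g z ≤ γ n z) ∧
      (∀ z ∈ Ω, Antitone (fun n : ℕ => γ n z) ∧
        Filter.Tendsto (fun n : ℕ => γ n z) Filter.atTop (nhds (g z))) ∧
      (∀ K : Set ℂ, K ⊆ Ω → IsCompact K →
        TendstoUniformlyOn (fun n z => γ n z) g Filter.atTop K) := by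
  classical
  -- unit vectors in each `U n`
  have hUnit : ∀ n : ℕ, ∃ u ∈ (U n : Set H), ‖u‖ = 1 := by
    intro n
    obtain ⟨u, hu, hu0⟩ := hnontriv n
    exact ⟨(‖u‖ : ℂ)⁻¹ • u, (U n).smul_mem _ hu, norm_normalize hu0⟩
  have hγ' : ∀ (n : ℕ) (z : ℂ), γ n z = Gam (T z) (U n : Set H) := by
    intro n z
    rw [hγ n z]
    rfl
  have hg' : ∀ z : ℂ, g z = Gam (T z) (Set.univ : Set H) := by
    intro z
    rw [hg z, Gam_univ_eq]
  -- (a) and lower bound, valid for all z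
  have hge : ∀ (n : ℕ) (z : ℂ), g z ≤ γ n z := by
    intro n z
    rw [hg' z, hγ' n z]
    exact min_le_min (phi_anti (Set.subset_univ _) (hUnit n))
      (phi_anti (Set.subset_univ _) (hUnit n))
  -- antitonicity, valid for all z
  have hanti : ∀ z : ℂ, Antitone (fun n : ℕ => γ n z) := by
    intro z n m hnm
    simp only
    rw [hγ' n z, hγ' m z]
    exact min_le_min (phi_anti (fun x hx => hmono hnm hx) (hUnit n))
      (phi_anti (fun x hx => hmono hnm hx) (hUnit n))
  -- pointwise convergence, valid for all z
  have hlim : ∀ z : ℂ, Filter.Tendsto (fun n : ℕ => γ n z) Filter.atTop (nhds (g z)) := by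
    intro z
    have hbddr : BddBelow (Set.range fun n : ℕ => γ n z) := by
      refine ⟨g z, ?_⟩
      rintro x ⟨n, rfl⟩
      exact hge n z
    have htend := tendsto_atTop_ciInf (hanti z) hbddr
    have hiInf : ⨅ n : ℕ, γ n z = g z := by
      apply le_antisymm
      · apply le_of_forall_pos_le_add
        intro ε hε
        rw [hg' z]
        rcases le_total (sInf (sphSet (T z) (Set.univ : Set H)))
            (sInf (sphSet (ContinuousLinearMap.adjoint (T z)) (Set.univ : Set H))) with hc | hc
        · obtain ⟨n, u, hun, hu1, hAu⟩ := approx U hdense (T z) hε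
          refine ciInf_le_of_le hbddr n ?_
          have hGu : Gam (T z) (Set.univ : Set H) = sInf (sphSet (T z) (Set.univ : Set H)) :=
            min_eq_left hc
          rw [hγ' n z, hGu]
          exact le_trans (min_le_left _ _) (le_trans (phi_le hun hu1) hAu)
        · obtain ⟨n, u, hun, hu1, hAu⟩ := approx U hdense (ContinuousLinearMap.adjoint (T z)) hε
          refine ciInf_le_of_le hbddr n ?_
          have hGu : Gam (T z) (Set.univ : Set H) =
              sInf (sphSet (ContinuousLinearMap.adjoint (T z)) (Set.univ : Set H)) :=
            min_eq_right hc
          rw [hγ' n z, hGu]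
          exact le_trans (min_le_right _ _) (le_trans (phi_le hun hu1) hAu)
      · exact le_ciInf fun n => hge n z
    rwa [hiInf] at htend
  -- continuity of the `Gam`-type functions on `Ω`
  have hlipcont : ∀ V : Set H, (∃ u ∈ V, ‖u‖ = 1) →
      ContinuousOn (fun z => Gam (T z) V) Ω := by
    intro V hne z hz
    have hTz := hT z hz
    rw [Metric.continuousWithinAt_iff] at hTz ⊢
    intro ε hε
    obtain ⟨δ, hδ, hδ'⟩ := hTz ε hε
    refine ⟨δ, hδ, fun {w} hw hwd => ?_⟩
    have h1 := Gam_lip (A := T w) (B := T z) (V := V) hne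
    rw [Real.dist_eq]
    calc |Gam (T w) V - Gam (T z) V| ≤ ‖T w - T z‖ := h1
      _ = dist (T w) (T z) := (dist_eq_norm _ _).symm
      _ < ε := hδ' hw hwd
  have hγcont : ∀ n : ℕ, ContinuousOn (fun z => γ n z) Ω := by
    intro n
    have : (fun z => γ n z) = fun z => Gam (T z) (U n : Set H) := funext fun z => hγ' n z
    rw [this]
    exact hlipcont _ (hUnit n)
  have hgcont : ContinuousOn g Ω := by
    have : g = fun z => Gam (T z) (Set.univ : Set H) := funext hg'
    rw [this]
    exact hlipcont _ univ_unit
  refine ⟨fun n z _ => hge n z, fun z _ => ⟨hanti z, hlim z⟩, ?_⟩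
  intro K hK hcomp
  exact dini hopen hK hcomp hγcont hgcont (fun z _ => hanti z) (fun z _ => hlim z)
    (fun n z _ => hge n z)
end

section
/- Let H be a nontrivial complex Hilbert space, Ω ⊆ ℂ a nonempty open set, T : Ω → B(H) holomorphic in the operator norm, (U_n)_{n∈ℕ} a nondecreasing sequence of nontrivial linear subspaces of H with dense union, and ε > 0. For z ∈ Ω define γ_n(z) = min( inf{‖T(z)u‖ : u ∈ U_n, ‖u‖ = 1}, inf{‖T(z)* u‖ : u ∈ U_n, ‖u‖ = 1} ). If γ_n(z) < ε for some n ∈ ℕ and z ∈ Ω, then z ∈ Λ_ε(T); that is, there exists a holomorphic E : Ω → B(H) with sup_{w∈Ω} ‖E(w)‖ < ε such that T(z) + E(z) is not invertible. -/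
/-- The verified pseudospectrum inclusion `{z : γ_n(z,T) < ε} ⊆ Λ_ε(T)`:
if `γ_n(z) < ε` for some `n`, then there is a holomorphic perturbation `E` with
`sup_{w ∈ Ω} ‖E(w)‖ < ε` such that `T(z) + E(z)` is not invertible. -/
theorem stmt_6 {H : Type*} [NormedAddCommGroup H] [InnerProductSpace ℂ H]
    [CompleteSpace H] [Nontrivial H]
    (Ω : Set ℂ) (hne : Ω.Nonempty) (hopen : IsOpen Ω)
    (T : ℂ → H →L[ℂ] H) (hT : DifferentiableOn ℂ T Ω)
    (U : ℕ → Submodule ℂ H) (hmono : Monotone U)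
    (hnontriv : ∀ n : ℕ, ∃ u ∈ U n, u ≠ 0)
    (hdense : Dense (⋃ n : ℕ, (U n : Set H)))
    (ε : ℝ) (hε : 0 < ε)
    (γ : ℕ → ℂ → ℝ)
    (hγ : ∀ (n : ℕ) (z : ℂ), γ n z =
      min (sInf {r : ℝ | ∃ u ∈ U n, ‖u‖ = 1 ∧ r = ‖T z u‖})
          (sInf {r : ℝ | ∃ u ∈ U n, ‖u‖ = 1 ∧
            r = ‖ContinuousLinearMap.adjoint (T z) u‖}))
    (n : ℕ) (z : ℂ) (hz : z ∈ Ω) (hγn : γ n z < ε) :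
    ∃ E : ℂ → H →L[ℂ] H, DifferentiableOn ℂ E Ω ∧
      (∃ c : ℝ, c < ε ∧ ∀ w ∈ Ω, ‖E w‖ ≤ c) ∧ ¬ IsUnit (T z + E z) := by
  classical
  set A := T z with hA
  -- a unit vector in U n
  obtain ⟨u, huU, hu0⟩ := hnontriv n
  set v0 : H := (‖u‖⁻¹ : ℂ) • u with hv0def
  have hv0 : ‖v0‖ = 1 := by
    have h : ‖u‖ ≠ 0 := norm_ne_zero_iff.mpr hu0
    simp [hv0def, norm_smul, inv_mul_cancel₀ h]
  have hv0U : v0 ∈ U n := Submodule.smul_mem _ _ huU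
  rw [hγ, min_lt_iff] at hγn
  have hcases : (∃ v, ‖v‖ = 1 ∧ ‖A v‖ < ε) ∨
      (∃ v, ‖v‖ = 1 ∧ ‖ContinuousLinearMap.adjoint A v‖ < ε) := by
    rcases hγn with h | h
    · obtain ⟨r, ⟨v, _, hv1, hr⟩, hrε⟩ :=
        exists_lt_of_csInf_lt (s := {r : ℝ | ∃ u ∈ U n, ‖u‖ = 1 ∧ r = ‖T z u‖}) ⟨‖A v0‖, ⟨v0, hv0U, hv0, rfl⟩⟩ h
      exact Or.inl ⟨v, hv1, hr ▸ hrε⟩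
    · obtain ⟨r, ⟨v, _, hv1, hr⟩, hrε⟩ :=
        exists_lt_of_csInf_lt (s := {r : ℝ | ∃ u ∈ U n, ‖u‖ = 1 ∧ r = ‖ContinuousLinearMap.adjoint (T z) u‖}) ⟨‖ContinuousLinearMap.adjoint A v0‖, ⟨v0, hv0U, hv0, rfl⟩⟩ h
      exact Or.inr ⟨v, hv1, hr ▸ hrε⟩
  rcases hcases with ⟨v, hv1, hvε⟩ | ⟨v, hv1, hvε⟩
  · -- kill v: E = -(⟪v,·⟫ • A v)
    refine ⟨fun _ => -((innerSL ℂ v).smulRight (A v)), differentiableOn_const _,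
      ⟨‖A v‖, hvε, fun w _ => ?_⟩, ?_⟩
    · rw [norm_neg, ContinuousLinearMap.norm_smulRight_apply, innerSL_apply_norm, hv1, one_mul]
    · intro hU
      have hv00 : (A + -((innerSL ℂ v).smulRight (A v))) v = 0 := by
        have hinner : (inner ℂ v v : ℂ) = 1 := by
          rw [inner_self_eq_norm_sq_to_K, hv1]; norm_num
        simp [ContinuousLinearMap.smulRight_apply, innerSL_apply_apply, hinner, hv1]
      obtain ⟨w, hw⟩ := hU
      have h1 : (↑w⁻¹ * ↑w : H →L[ℂ] H) v = v := by
        rw [w.inv_mul]; rfl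
      rw [ContinuousLinearMap.mul_apply, hw, hv00, map_zero] at h1
      rw [← h1, norm_zero] at hv1
      norm_num at hv1
  · -- kill v for the adjoint: E = -(⟪A* v,·⟫ • v)
    set Av := ContinuousLinearMap.adjoint A v with hAv
    refine ⟨fun _ => -((innerSL ℂ Av).smulRight v), differentiableOn_const _,
      ⟨‖Av‖, hvε, fun w _ => ?_⟩, ?_⟩
    · rw [norm_neg, ContinuousLinearMap.norm_smulRight_apply, innerSL_apply_norm, hv1, mul_one]
    · intro hU
      have key : ∀ x : H, (inner ℂ v ((A + -((innerSL ℂ Av).smulRight v)) x) : ℂ) = 0 := by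
        intro x
        have hinner : (inner ℂ v v : ℂ) = 1 := by
          rw [inner_self_eq_norm_sq_to_K, hv1]; norm_num
        have hadj : (inner ℂ Av x : ℂ) = inner ℂ v (A x) :=
          ContinuousLinearMap.adjoint_inner_left A x v
        simp only [ContinuousLinearMap.add_apply, ContinuousLinearMap.neg_apply,
          ContinuousLinearMap.smulRight_apply, innerSL_apply_apply, inner_add_right,
          inner_neg_right, inner_smul_right, hinner, hadj, mul_one]
        ring
      obtain ⟨w, hw⟩ := hU
      have h1 : (↑w * ↑w⁻¹ : H →L[ℂ] H) v = v := by
        rw [w.mul_inv]; rfl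
      rw [ContinuousLinearMap.mul_apply, hw] at h1
      have := key ((↑w⁻¹ : H →L[ℂ] H) v)
      rw [h1] at this
      rw [inner_self_eq_norm_sq_to_K, hv1] at this
      norm_num at this
end

section
/- Let H be a complex Hilbert space, m, q ≥ 1, E_m = ℂ^m and E_q = ℂ^q with their Euclidean inner products. Let V, W : E_m → H, 𝒱 : E_q → H, and V₀ : E_m → E_q be bounded linear maps, let J : E_m → E_m be linear, and let z ∈ ℂ be such that z·I − J is invertible. Let R, S ∈ B(H) satisfy S = V ∘ (z·I − J)⁻¹ ∘ W* + R and ‖R‖ ≤ M, and define F : E_m → H by F = V ∘ (J − z·I) ∘ W* ∘ 𝒱 ∘ V₀. Assume there exists L₁ ∈ B(H) with W* ∘ L₁ ∘ V = I on E_m, and assume there is b > 0 such that ‖(V ∘ W* ∘ 𝒱 ∘ V₀) x‖ ≥ b ‖x‖ for all x ∈ E_m. Let δ > 0 with M δ ‖L₁‖ < b. If there exists x ∈ E_m with ‖x‖ = 1 and ‖F x‖ < δ, then ‖S‖ > b/(δ ‖L₁‖) − M. (This is the key estimate behind the inclusion Λ_δ(F) ∩ int(Γ) ⊆ Λ_{δ₂}(T)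 ∩ int(Γ) in the stability analysis of the infinite-dimensional Beyn method, where S plays the role of T(z)⁻¹ from the Keldysh expansion T(z)⁻¹ = V(zI−J)⁻¹W* + R(z), b plays the role of σ_m(VW*)σ_m(VW*𝒱), and ‖L₁‖ plays the role of 1/σ_m(VW*).) -/
open ContinuousLinearMap

/-- Key estimate behind `Λ_δ(F) ∩ int(Γ) ⊆ Λ_{δ₂}(T) ∩ int(Γ)` in the stability analysis
of the infinite-dimensional Beyn method: if `S = V (zI - J)⁻¹ W* + R` with `‖R‖ ≤ M`,
`F = V (J - zI) W* 𝒱 V₀`, `W* L₁ V = I`, `‖(V W* 𝒱 V₀) x‖ ≥ b ‖x‖`, `M δ ‖L₁‖ < b`,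
and `‖F x‖ < δ` for some unit vector `x`, then `‖S‖ > b/(δ‖L₁‖) - M`. -/
theorem stmt_7 {H : Type*} [NormedAddCommGroup H] [InnerProductSpace ℂ H]
    [CompleteSpace H]
    (m q : ℕ) (hm : 1 ≤ m) (hq : 1 ≤ q)
    (V W : EuclideanSpace ℂ (Fin m) →L[ℂ] H)
    (𝒱 : EuclideanSpace ℂ (Fin q) →L[ℂ] H)
    (V₀ : EuclideanSpace ℂ (Fin m) →L[ℂ] EuclideanSpace ℂ (Fin q))
    (J : EuclideanSpace ℂ (Fin m) →L[ℂ] EuclideanSpace ℂ (Fin m))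
    (z : ℂ)
    (Ji : EuclideanSpace ℂ (Fin m) →L[ℂ] EuclideanSpace ℂ (Fin m))
    (hJi1 : (z • (1 : EuclideanSpace ℂ (Fin m) →L[ℂ] EuclideanSpace ℂ (Fin m)) - J) * Ji = 1)
    (hJi2 : Ji * (z • (1 : EuclideanSpace ℂ (Fin m) →L[ℂ] EuclideanSpace ℂ (Fin m)) - J) = 1)
    (R S : H →L[ℂ] H) (M : ℝ) (hR : ‖R‖ ≤ M)
    (hS : S = V.comp (Ji.comp (adjoint W)) + R)
    (F : EuclideanSpace ℂ (Fin m) →L[ℂ] H)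
    (hF : F = V.comp
      ((J - z • (1 : EuclideanSpace ℂ (Fin m) →L[ℂ] EuclideanSpace ℂ (Fin m))).comp
        ((adjoint W).comp (𝒱.comp V₀))))
    (L₁ : H →L[ℂ] H)
    (hL₁ : (adjoint W).comp (L₁.comp V) = 1)
    (b : ℝ) (hb : 0 < b)
    (hlow : ∀ x : EuclideanSpace ℂ (Fin m),
      b * ‖x‖ ≤ ‖(V.comp ((adjoint W).comp (𝒱.comp V₀))) x‖)
    (δ : ℝ) (hδ : 0 < δ) (hMδ : M * δ * ‖L₁‖ < b)
    (x : EuclideanSpace ℂ (Fin m)) (hx : ‖x‖ = 1) (hFx : ‖F x‖ < δ) :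
    b / (δ * ‖L₁‖) - M < ‖S‖ := by
  set A := adjoint W with hA
  set y : EuclideanSpace ℂ (Fin m) := A (𝒱 (V₀ x)) with hy
  have hL₁' : ∀ c, A (L₁ (V c)) = c := fun c => by
    have := congrArg (fun T => T c) hL₁
    simpa using this
  have hJiK : ∀ c : EuclideanSpace ℂ (Fin m),
      Ji ((J - z • (1 : EuclideanSpace ℂ (Fin m) →L[ℂ] EuclideanSpace ℂ (Fin m))) c) = -c := by
    intro c
    have h1 : Ji ((z • (1 : EuclideanSpace ℂ (Fin m) →L[ℂ] EuclideanSpace ℂ (Fin m)) - J) c)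
        = c := by
      have := congrArg (fun T => T c) hJi2
      simpa using this
    have h2 : (J - z • (1 : EuclideanSpace ℂ (Fin m) →L[ℂ] EuclideanSpace ℂ (Fin m))) c
        = -((z • (1 : EuclideanSpace ℂ (Fin m) →L[ℂ] EuclideanSpace ℂ (Fin m)) - J) c) := by
      simp only [sub_apply, smul_apply, one_apply, neg_sub]
    rw [h2, map_neg, h1]
  have hFx' : F x = V ((J - z • (1 : EuclideanSpace ℂ (Fin m) →L[ℂ] EuclideanSpace ℂ (Fin m))) y) := by
    rw [hF]; rfl
  have hkey : S (L₁ (F x)) = -(V y) + R (L₁ (F x)) := by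
    rw [hS]
    simp only [add_apply, comp_apply]
    congr 1
    rw [hFx', hL₁', hJiK, map_neg]
  have hVy : V y = R (L₁ (F x)) - S (L₁ (F x)) := by rw [hkey]; abel
  have hL₁pos : 0 < ‖L₁‖ := by
    have hx0 : x ≠ 0 := by intro h; rw [h] at hx; simp at hx
    refine norm_pos_iff.mpr (fun h0 => hx0 ?_)
    have := hL₁' x
    rw [h0] at this
    simpa using this.symm
  have hVyle : ‖V y‖ ≤ (M + ‖S‖) * (‖L₁‖ * ‖F x‖) := by
    rw [hVy]
    calc ‖R (L₁ (F x)) - S (L₁ (F x))‖ ≤ ‖R (L₁ (F x))‖ + ‖S (L₁ (F x))‖ := norm_sub_le _ _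
      _ ≤ M * (‖L₁‖ * ‖F x‖) + ‖S‖ * (‖L₁‖ * ‖F x‖) := by
          refine add_le_add ?_ ?_
          · exact (R.le_opNorm _).trans (mul_le_mul hR (L₁.le_opNorm _) (norm_nonneg _)
              ((norm_nonneg R).trans hR))
          · exact (S.le_opNorm _).trans (mul_le_mul le_rfl (L₁.le_opNorm _) (norm_nonneg _)
              (norm_nonneg _))
      _ = (M + ‖S‖) * (‖L₁‖ * ‖F x‖) := by ring
  have hbVy : b ≤ ‖V y‖ := by
    have := hlow x
    rw [hx, mul_one] at this
    simpa [comp_apply, hy] using this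
  have hMS : 0 < M + ‖S‖ := by
    by_contra h
    push_neg at h
    have h1 : (M + ‖S‖) * (‖L₁‖ * ‖F x‖) ≤ 0 :=
      mul_nonpos_of_nonpos_of_nonneg h (by positivity)
    linarith [hbVy.trans hVyle]
  have hfinal : b < (M + ‖S‖) * (‖L₁‖ * δ) := by
    calc b ≤ (M + ‖S‖) * (‖L₁‖ * ‖F x‖) := hbVy.trans hVyle
      _ < (M + ‖S‖) * (‖L₁‖ * δ) := by gcongr
  have hδL : 0 < δ * ‖L₁‖ := by positivity
  rw [sub_lt_iff_lt_add, div_lt_iff₀ hδL]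
  have heq : (M + ‖S‖) * (‖L₁‖ * δ) = (‖S‖ + M) * (δ * ‖L₁‖) := by ring
  linarith [hfinal]
end

section
/- Let H be a complex Hilbert space, m, q ≥ 1, E_m = ℂ^m and E_q = ℂ^q with their Euclidean inner products. Let V, W : E_m → H, 𝒱 : E_q → H, and V₀ : E_m → E_q be bounded linear maps, let J : E_m → E_m be linear, and let z ∈ ℂ be such that z·I − J is invertible. Let R, S ∈ B(H) satisfy S = V ∘ (z·I − J)⁻¹ ∘ W* + R and ‖R‖ ≤ M, and define F : E_m → H by F = V ∘ (J − z·I) ∘ W* ∘ 𝒱 ∘ V₀. Assume there exists a bounded linear map L₂ : H → E_m with (W* ∘ 𝒱 ∘ V₀) ∘ L₂ ∘ V = I on E_m, and assume there is c > 0 such that ‖L₂ (V w)‖ ≥ c ‖V w‖ for all w ∈ E_m. Let δ₁ > 0 with δ₁ M < 1. If there exists u ∈ H with ‖u‖ = 1 and ‖S u‖ > 1/δ₁, then there exists x ∈ E_m, x ≠ 0, with ‖F x‖ / ‖x‖ < ‖V ∘ W*‖ / ( c (1/δ₁ − M) ). (This is the key estimate behind the inclusion Λ_{δ₁}(T) ∩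 int(Γ) ⊆ Λ_δ(F) ∩ int(Γ) in the stability analysis of the infinite-dimensional Beyn method, where S plays the role of T(z)⁻¹ from the Keldysh expansion and c plays the role of 1/‖VW*𝒱V₀‖.) -/
open ContinuousLinearMap

/-- Key estimate behind `Λ_{δ₁}(T) ∩ int(Γ) ⊆ Λ_δ(F) ∩ int(Γ)` in the stability analysis
of the infinite-dimensional Beyn method: if `S = V (zI - J)⁻¹ W* + R` with `‖R‖ ≤ M`,
`F = V (J - zI) W* 𝒱 V₀`, `(W* 𝒱 V₀) L₂ V = I`, `‖L₂ (V w)‖ ≥ c ‖V w‖`, `δ₁ M < 1`,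
and `‖S u‖ > 1/δ₁` for some unit vector `u`, then there is `x ≠ 0` with
`‖F x‖/‖x‖ < ‖V W*‖ / (c (1/δ₁ - M))`. -/
theorem stmt_8 {H : Type*} [NormedAddCommGroup H] [InnerProductSpace ℂ H]
    [CompleteSpace H]
    (m q : ℕ) (hm : 1 ≤ m) (hq : 1 ≤ q)
    (V W : EuclideanSpace ℂ (Fin m) →L[ℂ] H)
    (𝒱 : EuclideanSpace ℂ (Fin q) →L[ℂ] H)
    (V₀ : EuclideanSpace ℂ (Fin m) →L[ℂ] EuclideanSpace ℂ (Fin q))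
    (J : EuclideanSpace ℂ (Fin m) →L[ℂ] EuclideanSpace ℂ (Fin m))
    (z : ℂ)
    (Ji : EuclideanSpace ℂ (Fin m) →L[ℂ] EuclideanSpace ℂ (Fin m))
    (hJi1 : (z • (1 : EuclideanSpace ℂ (Fin m) →L[ℂ] EuclideanSpace ℂ (Fin m)) - J) * Ji = 1)
    (hJi2 : Ji * (z • (1 : EuclideanSpace ℂ (Fin m) →L[ℂ] EuclideanSpace ℂ (Fin m)) - J) = 1)
    (R S : H →L[ℂ] H) (M : ℝ) (hR : ‖R‖ ≤ M)
    (hS : S = V.comp (Ji.comp (adjoint W)) + R)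
    (F : EuclideanSpace ℂ (Fin m) →L[ℂ] H)
    (hF : F = V.comp
      ((J - z • (1 : EuclideanSpace ℂ (Fin m) →L[ℂ] EuclideanSpace ℂ (Fin m))).comp
        ((adjoint W).comp (𝒱.comp V₀))))
    (L₂ : H →L[ℂ] EuclideanSpace ℂ (Fin m))
    (hL₂ : ((adjoint W).comp (𝒱.comp V₀)).comp (L₂.comp V) = 1)
    (c : ℝ) (hc : 0 < c)
    (hlow : ∀ w : EuclideanSpace ℂ (Fin m), c * ‖V w‖ ≤ ‖L₂ (V w)‖)
    (δ₁ : ℝ) (hδ₁ : 0 < δ₁) (hδ₁M : δ₁ * M < 1)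
    (u : H) (hu : ‖u‖ = 1) (hSu : 1 / δ₁ < ‖S u‖) :
    ∃ x : EuclideanSpace ℂ (Fin m), x ≠ 0 ∧
      ‖F x‖ / ‖x‖ < ‖V.comp (adjoint W)‖ / (c * (1 / δ₁ - M)) := by

  set y : EuclideanSpace ℂ (Fin m) := Ji ((adjoint W) u) with hy
  set x : EuclideanSpace ℂ (Fin m) := L₂ (V y) with hx
  have hM0 : 0 ≤ M := le_trans (norm_nonneg R) hR
  have hpos : 0 < 1 / δ₁ - M := by
    have : M < 1 / δ₁ := by
      rw [lt_div_iff₀ hδ₁]; linarith [hδ₁M, mul_comm δ₁ M]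
    linarith
  -- S u = V y + R u
  have hSu' : S u = V y + R u := by
    rw [hS]; rfl
  have hRu : ‖R u‖ ≤ M := by
    calc ‖R u‖ ≤ ‖R‖ * ‖u‖ := R.le_opNorm u
    _ = ‖R‖ := by rw [hu, mul_one]
    _ ≤ M := hR
  have hVy : 1 / δ₁ - M < ‖V y‖ := by
    have h1 : ‖S u‖ ≤ ‖V y‖ + ‖R u‖ := hSu' ▸ norm_add_le _ _
    linarith
  have hVy0 : (0:ℝ) < ‖V y‖ := lt_trans hpos hVy
  have hxnorm : c * (1 / δ₁ - M) < ‖x‖ := by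
    calc c * (1 / δ₁ - M) < c * ‖V y‖ := by
          exact (mul_lt_mul_iff_right₀ hc).mpr hVy
    _ ≤ ‖L₂ (V y)‖ := hlow y
    _ = ‖x‖ := rfl
  have hxpos : (0:ℝ) < ‖x‖ := lt_trans (by positivity) hxnorm
  have hxne : x ≠ 0 := by
    intro h; rw [h, norm_zero] at hxpos; exact lt_irrefl 0 hxpos
  -- A x = y
  have hAx : ((adjoint W).comp (𝒱.comp V₀)) x = y := by
    have := congrArg (fun T => T y) hL₂
    simpa using this
  -- (J - z•1) y = -(adjoint W) u
  have hJy : (J - z • (1 : EuclideanSpace ℂ (Fin m) →L[ℂ] EuclideanSpace ℂ (Fin m))) y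
      = -((adjoint W) u) := by
    have h := congrArg (fun T => T ((adjoint W) u)) hJi1
    simp only [mul_apply_eq_comp, one_apply_eq_self] at h
    have : (z • (1 : EuclideanSpace ℂ (Fin m) →L[ℂ] EuclideanSpace ℂ (Fin m)) - J) y
        = (adjoint W) u := h
    have h2 : (J - z • (1 : EuclideanSpace ℂ (Fin m) →L[ℂ] EuclideanSpace ℂ (Fin m)))
        = -((z • (1 : EuclideanSpace ℂ (Fin m) →L[ℂ] EuclideanSpace ℂ (Fin m))) - J) := by
      abel
    rw [h2, neg_apply, this]
  have hFx : F x = -(V.comp (adjoint W)) u := by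
    rw [hF]
    simp only [comp_apply]
    rw [show ((adjoint W) ((𝒱) (V₀ x))) = y from hAx, hJy]
    simp
  have hFxnorm : ‖F x‖ ≤ ‖V.comp (adjoint W)‖ := by
    rw [hFx, norm_neg]
    calc ‖(V.comp (adjoint W)) u‖ ≤ ‖V.comp (adjoint W)‖ * ‖u‖ := le_opNorm _ u
    _ = ‖V.comp (adjoint W)‖ := by rw [hu, mul_one]
  have hVW0 : 0 < ‖V.comp (adjoint W)‖ := by
    rcases (norm_nonneg (V.comp (adjoint W))).lt_or_eq with h | h
    · exact h
    · exfalso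
      have hz : V.comp (adjoint W) = 0 := by
        rw [← norm_eq_zero]; exact h.symm
      have hV : V = 0 := by
        have h1 : V.comp (((adjoint W).comp (𝒱.comp V₀)).comp (L₂.comp V)) = V := by
          rw [hL₂]; ext w; simp
        have h2 : V.comp (((adjoint W).comp (𝒱.comp V₀)).comp (L₂.comp V))
            = ((V.comp (adjoint W)).comp (𝒱.comp V₀)).comp (L₂.comp V) := by
          ext w; simp
        rw [h2, hz] at h1
        rw [← h1]; ext w; simp
      rw [hV] at hVy0; simp at hVy0
  refine ⟨x, hxne, ?_⟩
  calc ‖F x‖ / ‖x‖ ≤ ‖V.comp (adjoint W)‖ / ‖x‖ :=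
        div_le_div_of_nonneg_right hFxnorm hxpos.le
  _ < ‖V.comp (adjoint W)‖ / (c * (1 / δ₁ - M)) := by
      apply div_lt_div_of_pos_left hVW0 (by positivity) hxnorm
end

section
/- Let λ ∈ ℂ and let p : ℝ → ℂ be twice differentiable with p''(x) = −4π²λ² p(x) for all x ∈ ℝ. If p(0) = 0 and p'(1) + 2πiλ p(1) = 0, then p is identically zero. (This shows that the one-dimensional acoustic wave nonlinear eigenvalue problem p'' + 4π²λ²p = 0, p(0) = 0, χ p'(1) + 2πiλ p(1) = 0 with impedance χ = 1 has empty spectrum: there is no λ ∈ ℂ admitting a nonzero solution.) -/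
open Real

/-- The one-dimensional acoustic wave NEP with impedance `χ = 1` has empty spectrum:
if `p'' = -4π²λ²p`, `p(0) = 0` and `p'(1) + 2πiλ p(1) = 0`, then `p ≡ 0`. -/
theorem stmt_10 (lam : ℂ) (p : ℝ → ℂ)
    (hp1 : Differentiable ℝ p) (hp2 : Differentiable ℝ (deriv p))
    (hode : ∀ x : ℝ, deriv (deriv p) x = -(4 * (π : ℂ) ^ 2 * lam ^ 2) * p x)
    (hbc0 : p 0 = 0)
    (hbc1 : deriv p 1 + 2 * (π : ℂ) * Complex.I * lam * p 1 = 0) :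
    ∀ x : ℝ, p x = 0 := by
  set μ : ℂ := 2 * (π : ℂ) * lam with hμ
  set q : ℝ → ℂ := fun x => deriv p x + Complex.I * μ * p x with hq
  have hcoer : ∀ (c : ℂ) (x : ℝ),
      HasDerivAt (fun t : ℝ => Complex.exp (c * t)) (Complex.exp (c * x) * c) x := by
    intro c x
    have h1 : HasDerivAt (fun t : ℝ => (t : ℂ)) 1 x := Complex.ofRealCLM.hasDerivAt
    have h2 := (h1.const_mul c).cexp
    simpa using h2
  -- q satisfies q' = iμ q
  have hqder : ∀ x : ℝ, HasDerivAt q (Complex.I * μ * q x) x := by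
    intro x
    have h := ((hp2 x).hasDerivAt).add (((hp1 x).hasDerivAt).const_mul (Complex.I * μ))
    have hval : deriv (deriv p) x + Complex.I * μ * deriv p x = Complex.I * μ * q x := by
      rw [hode x, hq]
      simp only [hμ]
      linear_combination (-(4 * (π : ℂ) ^ 2 * lam ^ 2) * p x) * Complex.I_sq
    rw [hval] at h
    exact h
  -- integrating factor: F := exp(-(iμ)x) q is constant, F 1 = 0
  have hF : ∀ x : ℝ, HasDerivAt (fun t : ℝ => Complex.exp (-(Complex.I * μ) * t) * q t) 0 x := by
    intro x
    have h := (hcoer (-(Complex.I * μ)) x).mul (hqder x)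
    convert h using 1
    · rfl
    · rfl
    ring
  have hFconst : ∀ x : ℝ, Complex.exp (-(Complex.I * μ) * x) * q x
      = Complex.exp (-(Complex.I * μ) * 1) * q 1 := by
    intro x
    have hd : Differentiable ℝ (fun t : ℝ => Complex.exp (-(Complex.I * μ) * t) * q t) :=
      fun t => (hF t).differentiableAt
    exact is_const_of_deriv_eq_zero hd (fun t => (hF t).deriv) x 1
  have hq1 : q 1 = 0 := by
    rw [hq]
    simp only [hμ]
    linear_combination hbc1
  have hqzero : ∀ x : ℝ, q x = 0 := by
    intro x
    have := hFconst x
    rw [hq1, mul_zero] at this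
    exact (mul_eq_zero.mp this).resolve_left (Complex.exp_ne_zero _)
  -- now p' = -(iμ) p ; G := exp(iμ x) p is constant, G 0 = 0
  have hpder : ∀ x : ℝ, HasDerivAt p (-(Complex.I * μ) * p x) x := by
    intro x
    have h := (hp1 x).hasDerivAt
    have hx := hqzero x
    rw [hq] at hx
    simp only at hx
    have : deriv p x = -(Complex.I * μ) * p x := by linear_combination hx
    rwa [this] at h
  have hG : ∀ x : ℝ, HasDerivAt (fun t : ℝ => Complex.exp (Complex.I * μ * t) * p t) 0 x := by
    intro x
    have h := (hcoer (Complex.I * μ) x).mul (hpder x)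
    convert h using 1
    · rfl
    · rfl
    ring
  intro x
  have hd : Differentiable ℝ (fun t : ℝ => Complex.exp (Complex.I * μ * t) * p t) :=
    fun t => (hG t).differentiableAt
  have hc := is_const_of_deriv_eq_zero hd (fun t => (hG t).deriv) x 0
  rw [hbc0, mul_zero] at hc
  exact (mul_eq_zero.mp hc).resolve_left (Complex.exp_ne_zero _)
end

section
/- Let χ, λ ∈ ℂ with λ ≠ 0. The following are equivalent: (i) there exists a twice differentiable function p : ℝ → ℂ, not identically zero, with p''(x) = −4π²λ² p(x) for all x ∈ ℝ, p(0) = 0, and χ p'(1) + 2πiλ p(1) = 0; (ii) i·sin(2πλ) + χ·cos(2πλ) = 0. (This characterizes the eigenvalues of the one-dimensional acoustic wave nonlinear eigenvalue problem with impedance χ; the corresponding eigenfunction is p(x) = sin(2πλx).) -/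
open Real

/-- Characterization of the eigenvalues of the one-dimensional acoustic wave NEP
with impedance `χ`: there is a nonzero solution of `p'' = -4π²λ²p`, `p(0) = 0`,
`χ p'(1) + 2πiλ p(1) = 0` if and only if `i sin(2πλ) + χ cos(2πλ) = 0`. -/
theorem stmt_11 (χ lam : ℂ) (hlam : lam ≠ 0) :
    (∃ p : ℝ → ℂ, Differentiable ℝ p ∧ Differentiable ℝ (deriv p) ∧
        (∃ x : ℝ, p x ≠ 0) ∧
        (∀ x : ℝ, deriv (deriv p) x = -(4 * (π : ℂ) ^ 2 * lam ^ 2) * p x) ∧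
        p 0 = 0 ∧
        χ * deriv p 1 + 2 * (π : ℂ) * Complex.I * lam * p 1 = 0) ↔
      Complex.I * Complex.sin (2 * (π : ℂ) * lam) +
        χ * Complex.cos (2 * (π : ℂ) * lam) = 0 := by
  set ω : ℂ := 2 * (π : ℂ) * lam with hω
  have hωne : ω ≠ 0 := by
    simp only [hω]
    refine mul_ne_zero (mul_ne_zero two_ne_zero ?_) hlam
    exact_mod_cast Complex.ofReal_ne_zero.mpr Real.pi_ne_zero
  have hmul : ∀ x : ℝ, HasDerivAt (fun x : ℝ => ω * (x : ℂ)) ω x := by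
    intro x
    simpa using (Complex.ofRealCLM.hasDerivAt (x := x)).const_mul ω
  have hsin : ∀ x : ℝ, HasDerivAt (fun x : ℝ => Complex.sin (ω * x))
      (ω * Complex.cos (ω * x)) x := by
    intro x
    simpa [smul_eq_mul, mul_comm, Function.comp_def] using
      (Complex.hasDerivAt_sin (ω * x)).scomp x (hmul x)
  have hcos : ∀ x : ℝ, HasDerivAt (fun x : ℝ => Complex.cos (ω * x))
      (-(ω * Complex.sin (ω * x))) x := by
    intro x
    simpa [smul_eq_mul, mul_comm, Function.comp_def] using
      (Complex.hasDerivAt_cos (ω * x)).scomp x (hmul x)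
  constructor
  · rintro ⟨p, hdp, hdp2, ⟨x₀, hx₀⟩, hode, h0, hbc⟩
    have hp : ∀ x : ℝ, HasDerivAt p (deriv p x) x := fun x => (hdp x).hasDerivAt
    have hp2 : ∀ x : ℝ, HasDerivAt (deriv p) (-(ω ^ 2) * p x) x := by
      intro x
      have h := (hdp2 x).hasDerivAt
      have : deriv (deriv p) x = -(ω ^ 2) * p x := by
        rw [hode x, hω]; ring
      rwa [this] at h
    -- u is constant
    have hu' : ∀ x : ℝ, HasDerivAt
        (fun x : ℝ => ω * p x * Complex.cos (ω * x) - deriv p x * Complex.sin (ω * x)) 0 x := by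
      intro x
      have h1 := (((hp x).const_mul ω).mul (hcos x)).sub ((hp2 x).mul (hsin x))
      convert h1 using 1
      all_goals first | rfl | ring
    have hw' : ∀ x : ℝ, HasDerivAt
        (fun x : ℝ => ω * p x * Complex.sin (ω * x) + deriv p x * Complex.cos (ω * x)) 0 x := by
      intro x
      have h1 := (((hp x).const_mul ω).mul (hsin x)).add ((hp2 x).mul (hcos x))
      convert h1 using 1
      all_goals first | rfl | ring
    have hu : ∀ x : ℝ, ω * p x * Complex.cos (ω * x) - deriv p x * Complex.sin (ω * x) = 0 := by
      intro x
      have hc := is_const_of_deriv_eq_zero (f := fun x : ℝ =>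
          ω * p x * Complex.cos (ω * x) - deriv p x * Complex.sin (ω * x))
        (fun y => (hu' y).differentiableAt) (fun y => (hu' y).deriv) x 0
      simpa [h0] using hc
    have hw : ∀ x : ℝ, ω * p x * Complex.sin (ω * x) + deriv p x * Complex.cos (ω * x) =
        deriv p 0 := by
      intro x
      have hc := is_const_of_deriv_eq_zero (f := fun x : ℝ =>
          ω * p x * Complex.sin (ω * x) + deriv p x * Complex.cos (ω * x))
        (fun y => (hw' y).differentiableAt) (fun y => (hw' y).deriv) x 0
      simpa [h0] using hc
    set c : ℂ := deriv p 0 with hcdef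
    have hpx : ∀ x : ℝ, ω * p x = c * Complex.sin (ω * x) := by
      intro x
      have h1 := hu x
      have h2 := hw x
      have h3 := Complex.sin_sq_add_cos_sq (ω * x)
      linear_combination Complex.cos (ω * x) * h1 + Complex.sin (ω * x) * h2 -
        (ω * p x) * h3
    have hcne : c ≠ 0 := by
      intro hc0
      apply hx₀
      have := hpx x₀
      rw [hc0, zero_mul] at this
      exact (mul_eq_zero.mp this).resolve_left hωne
    have hpfun : p = fun x : ℝ => (c / ω) * Complex.sin (ω * x) := by
      funext x
      have := hpx x
      field_simp
      linear_combination this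
    have hd1 : deriv p 1 = c * Complex.cos (ω * 1) := by
      have h := ((hsin 1).const_mul (c / ω)).deriv
      rw [hpfun]
      rw [h]
      field_simp
      simp
    have hp1 : p 1 = (c / ω) * Complex.sin (ω * 1) := by rw [hpfun]; norm_num
    rw [hd1, hp1] at hbc
    have hb3 : ω * (c * (Complex.I * Complex.sin ω + χ * Complex.cos ω)) = 0 := by
      field_simp at hbc
      linear_combination hbc
    have hb2 := (mul_eq_zero.mp hb3).resolve_left hωne
    have := (mul_eq_zero.mp hb2).resolve_left hcne
    simpa using this
  · intro heq
    refine ⟨fun x : ℝ => Complex.sin (ω * x), fun x => (hsin x).differentiableAt, ?_, ?_, ?_, ?_, ?_⟩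
    · have hder : deriv (fun x : ℝ => Complex.sin (ω * x)) =
          fun x : ℝ => ω * Complex.cos (ω * x) := funext fun x => (hsin x).deriv
      rw [hder]
      exact fun x => ((hcos x).const_mul ω).differentiableAt
    · by_contra h
      push_neg at h
      have hz : (fun x : ℝ => Complex.sin (ω * x)) = fun _ => (0 : ℂ) := funext h
      have hd := (hsin 0).deriv
      rw [hz] at hd
      simp at hd
      exact hωne hd.symm
    · intro x
      have hder : deriv (fun x : ℝ => Complex.sin (ω * x)) =
          fun x : ℝ => ω * Complex.cos (ω * x) := funext fun y => (hsin y).deriv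
      rw [hder, ((hcos x).const_mul ω).deriv, hω]
      ring
    · simp
    · have hder : deriv (fun x : ℝ => Complex.sin (ω * x)) =
          fun x : ℝ => ω * Complex.cos (ω * x) := funext fun y => (hsin y).deriv
      rw [hder]
      push_cast
      simp only [mul_one]
      linear_combination ω * heq
end
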